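/- arXiv:2604.07581 — 3 statements merged into one kernel-verified Lean document; each statement's English description precedes it below -/
import Mathlib

section
/- Let D be a multiset of integers of size n, o an integer, and b ≥ 0. Define f_b(D) = min(|rank_D(o+b) − rank_D(o)|, |rank_D(o) − rank_D(o−b)|), where rank_D(y) = |{x ∈ D : x ≤ y}|. Then for any neighboring dataset D' (obtained by replacing one element of D), |f_b(D) − f_b(D')| ≤ 1. -/
/-- rank of `y` in multiset `D`: number of elements `≤ y`, with multiplicity. -/
def rankD (D : Multiset ℤ) (y : ℤ) : ℕ := (D.filter (· ≤ y)).card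

/-- helper function `f_b(D)`: smallest rank distance from either boundary `o ± b` to `o`. -/
def helperF (D : Multiset ℤ) (o b : ℤ) : ℤ :=
  min |(rankD D (o + b) : ℤ) - (rankD D o : ℤ)| |(rankD D o : ℤ) - (rankD D (o - b) : ℤ)|

lemma rank_cons (w : ℤ) (t : Multiset ℤ) (z : ℤ) :
    (rankD (w ::ₘ t) z : ℤ) = (rankD t z : ℤ) + if w ≤ z then 1 else 0 := by
  simp only [rankD, Multiset.filter_cons]
  split <;> simp

lemma rank_mono (t : Multiset ℤ) {z w : ℤ} (hzw : z ≤ w) :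
    (rankD t z : ℤ) ≤ (rankD t w : ℤ) := by
  exact_mod_cast Multiset.card_le_card
    (Multiset.monotone_filter_right t (fun a (ha : a ≤ z) => ha.trans hzw))

lemma key_ineq (r0 r1 r2 a0 a1 a2 b0 b1 b2 : ℤ)
    (h01 : r0 ≤ r1) (h12 : r1 ≤ r2)
    (ha0 : 0 ≤ a0) (ha01 : a0 ≤ a1) (ha12 : a1 ≤ a2) (ha2 : a2 ≤ 1)
    (hb0 : 0 ≤ b0) (hb01 : b0 ≤ b1) (hb12 : b1 ≤ b2) (hb2 : b2 ≤ 1) :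
    abs (min |r2 + a2 - (r1 + a1)| |r1 + a1 - (r0 + a0)| -
      min |r2 + b2 - (r1 + b1)| |r1 + b1 - (r0 + b0)|) ≤ 1 := by
  rw [abs_of_nonneg (show (0:ℤ) ≤ r2 + a2 - (r1 + a1) by omega),
    abs_of_nonneg (show (0:ℤ) ≤ r1 + a1 - (r0 + a0) by omega),
    abs_of_nonneg (show (0:ℤ) ≤ r2 + b2 - (r1 + b1) by omega),
    abs_of_nonneg (show (0:ℤ) ≤ r1 + b1 - (r0 + b0) by omega), abs_le]
  constructor <;> omega

theorem helper_sensitivity_one (D : Multiset ℤ) (o b : ℤ) (hb : 0 ≤ b)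
    (x y : ℤ) (hx : x ∈ D) :
    |helperF D o b - helperF (y ::ₘ D.erase x) o b| ≤ 1 := by
  conv_lhs => rw [show D = x ::ₘ D.erase x from (Multiset.cons_erase hx).symm]
  rw [Multiset.erase_cons_head, helperF, helperF,
    rank_cons, rank_cons, rank_cons, rank_cons, rank_cons, rank_cons]
  apply key_ineq
  · exact rank_mono _ (by omega)
  · exact rank_mono _ (by omega)
  all_goals split_ifs <;> omega
end

section
/- Let Y be a finite nonempty set and u : Y → ℝ with sensitivity Δ, meaning |u_D(y) − u_{D'}(y)| ≤ Δ for all neighboring D, D' and all y. Then the exponential mechanism M(D) outputting y with probability exp(ε·u_D(y)/(2Δ)) / Σ_{z∈Y} exp(ε·u_D(z)/(2Δ)) satisfies ε-DP: for every y ∈ Y and neighboring D, D', P[M(D)=y] ≤ e^ε · P[M(D')=y]. -/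
open Finset in
theorem exp_mech_dp {D : Type*} {Y : Type*} [Fintype Y] [Nonempty Y]
    (Neighbor : D → D → Prop) (u : D → Y → ℝ) (ε Δ : ℝ) (hε : 0 < ε) (hΔ : 0 < Δ)
    (hsens : ∀ d d', Neighbor d d' → ∀ y, |u d y - u d' y| ≤ Δ) :
    ∀ d d', Neighbor d d' → ∀ y : Y,
      Real.exp (ε * u d y / (2 * Δ)) / (∑ z : Y, Real.exp (ε * u d z / (2 * Δ))) ≤
      Real.exp ε *
        (Real.exp (ε * u d' y / (2 * Δ)) / (∑ z : Y, Real.exp (ε * u d' z / (2 * Δ)))) := by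
  intro d d' hN y
  have hΔ2 : (0:ℝ) < 2 * Δ := by linarith
  have key : ∀ a b : ℝ, |a - b| ≤ Δ →
      Real.exp (ε * a / (2 * Δ)) ≤ Real.exp (ε / 2) * Real.exp (ε * b / (2 * Δ)) := by
    intro a b hab
    rw [← Real.exp_add, Real.exp_le_exp]
    have h1 : a - b ≤ Δ := (abs_le.mp hab).2
    rw [div_add_div _ _ (two_ne_zero) (ne_of_gt hΔ2), div_le_div_iff₀ (by positivity) (by positivity)]
    nlinarith [mul_le_mul_of_nonneg_left h1 hε.le]
  set B := ∑ z : Y, Real.exp (ε * u d z / (2 * Δ)) with hB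
  set B' := ∑ z : Y, Real.exp (ε * u d' z / (2 * Δ)) with hB'
  have hBpos : 0 < B := Finset.sum_pos (fun z _ => Real.exp_pos _) Finset.univ_nonempty
  have hB'pos : 0 < B' := Finset.sum_pos (fun z _ => Real.exp_pos _) Finset.univ_nonempty
  have hnum : Real.exp (ε * u d y / (2 * Δ)) ≤
      Real.exp (ε / 2) * Real.exp (ε * u d' y / (2 * Δ)) :=
    key _ _ (hsens d d' hN y)
  have hden : B' ≤ Real.exp (ε / 2) * B := by
    rw [Finset.mul_sum]
    apply Finset.sum_le_sum
    intro z _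
    exact key _ _ (by rw [abs_sub_comm]; exact hsens d d' hN z)
  have hsplit : Real.exp ε = Real.exp (ε / 2) * Real.exp (ε / 2) := by
    rw [← Real.exp_add]; ring_nf
  rw [div_le_iff₀ hBpos]
  have h2 : Real.exp ε * (Real.exp (ε * u d' y / (2 * Δ)) / B') * B
      ≥ Real.exp (ε / 2) * Real.exp (ε * u d' y / (2 * Δ)) := by
    rw [hsplit]
    have e1 : Real.exp (ε / 2) * Real.exp (ε / 2) * (Real.exp (ε * u d' y / (2 * Δ)) / B') * B
        = Real.exp (ε / 2) * Real.exp (ε * u d' y / (2 * Δ)) * (Real.exp (ε / 2) * B / B') := by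
      field_simp
    rw [e1]
    nlinarith [Real.exp_pos (ε / 2), Real.exp_pos (ε * u d' y / (2 * Δ)),
      (one_le_div hB'pos).mpr hden, mul_pos (Real.exp_pos (ε/2)) (Real.exp_pos (ε * u d' y / (2 * Δ)))]
  linarith
end

section
/- Let P and Q be probability mass functions on a finite set Y with P(y) ∝ exp(ε·u(y)/2) and Q(y) ∝ exp(ε·u'(y)/2), where |u(y) − u'(y)| ≤ 1 for all y ∈ Y and ε > 0. Then for every y ∈ Y, P(y) ≤ e^ε · Q(y). -/
open Finset in
theorem exp_mech_pointwise_ratio {Y : Type*} [Fintype Y] [Nonempty Y]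
    (u u' : Y → ℝ) (ε : ℝ) (hε : 0 < ε)
    (hsens : ∀ y, |u y - u' y| ≤ 1) :
    ∀ y : Y,
      Real.exp (ε * u y / 2) / (∑ z : Y, Real.exp (ε * u z / 2)) ≤
      Real.exp ε * (Real.exp (ε * u' y / 2) / (∑ z : Y, Real.exp (ε * u' z / 2))) := by
  intro y
  set Su := ∑ z : Y, Real.exp (ε * u z / 2) with hSu
  set Su' := ∑ z : Y, Real.exp (ε * u' z / 2) with hSu'
  have hSupos : 0 < Su := Finset.sum_pos (fun z _ => Real.exp_pos _) Finset.univ_nonempty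
  have hSu'pos : 0 < Su' := Finset.sum_pos (fun z _ => Real.exp_pos _) Finset.univ_nonempty
  have hnum : Real.exp (ε * u y / 2) ≤ Real.exp (ε / 2) * Real.exp (ε * u' y / 2) := by
    rw [← Real.exp_add]
    apply Real.exp_le_exp.2
    have := (abs_le.1 (hsens y)).2
    nlinarith
  have hden : Su' ≤ Real.exp (ε / 2) * Su := by
    rw [Finset.mul_sum]
    apply Finset.sum_le_sum
    intro z _
    rw [← Real.exp_add]
    apply Real.exp_le_exp.2
    have := (abs_le.1 (hsens z)).1
    nlinarith
  have key : Real.exp (ε * u y / 2) * Su' ≤ Real.exp ε * Real.exp (ε * u' y / 2) * Su := by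
    calc Real.exp (ε * u y / 2) * Su'
        ≤ (Real.exp (ε / 2) * Real.exp (ε * u' y / 2)) * (Real.exp (ε / 2) * Su) := by
          apply mul_le_mul hnum hden hSu'pos.le
          positivity
      _ = Real.exp ε * Real.exp (ε * u' y / 2) * Su := by
          have h2 : Real.exp (ε / 2) * Real.exp (ε / 2) = Real.exp ε := by
            rw [← Real.exp_add]; ring_nf
          linear_combination (Real.exp (ε * u' y / 2) * Su) * h2
  rw [mul_div_assoc', div_le_div_iff₀ hSupos hSu'pos]
  linarith
end
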